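/- Let W : ℝ → ℝ be twice continuously differentiable with W(1) = W(−1) = 0 and W′(1) = W′(−1) = 0. Then there exists a constant C > 0, depending only on W, with the following property: for every finite measure space (M, μ), every measurable u : M → ℝ with |u| ≤ 1 a.e. on M, every measurable set K ⊆ M such that u ∈ {−1, 1} a.e. on M ∖ K, every m ∈ [0, 1], and every real c with |c| ≤ m, one has ∫_M |W(u − c) − W(u)| dμ ≤ C (m² μ(M) + m μ(K)). -/

import Mathlib

open MeasureTheory Set
open scoped NNReal

/-! Off `K`, `u` sits at one of the critical points `±1` of `W`, so the first-order term of
`W (u - c) - W u` vanishes and the Lipschitz constant `Q` of `W'` on `[-2, 2]` bounds it by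
`Q c²`; on `K` only the Lipschitz constant `L` of `W` on `[-2, 2]` is available, giving `L |c|`.
Integrating the pointwise bound `Q m² + L m 𝟙_K` gives the estimate with `C = L + Q + 1`. -/

theorem norm_sub_le_mul_sq_of_lipschitzOnWith_deriv {E : Type*} [NormedAddCommGroup E]
    [NormedSpace ℝ E] {f : ℝ → E} {s : Set ℝ} {Q : ℝ≥0} {a b : ℝ} (hs : Convex ℝ s)
    (hf : ∀ x ∈ s, DifferentiableAt ℝ f x) (hf' : LipschitzOnWith Q (deriv f) s)
    (ha : a ∈ s) (hb : b ∈ s) (hcrit : deriv f a = 0) :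
    ‖f b - f a‖ ≤ Q * (b - a) ^ 2 := by
  have hab : uIcc a b ⊆ s := by simpa only [segment_eq_uIcc] using hs.segment_subset ha hb
  have hderiv : ∀ x ∈ uIcc a b, ‖deriv f x‖ ≤ Q * |b - a| := fun x hx =>
    calc ‖deriv f x‖ = dist (deriv f x) (deriv f a) := by rw [hcrit, dist_zero_right]
      _ ≤ Q * dist x a := hf'.dist_le_mul x (hab hx) a ha
      _ ≤ Q * |b - a| := by gcongr; exact abs_sub_left_of_mem_uIcc hx
  calc ‖f b - f a‖ ≤ Q * |b - a| * ‖b - a‖ :=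
        (convex_uIcc a b).norm_image_sub_le_of_norm_deriv_le (fun x hx => hf x (hab hx))
          hderiv left_mem_uIcc right_mem_uIcc
    _ = Q * (b - a) ^ 2 := by rw [Real.norm_eq_abs, mul_assoc, abs_mul_abs_self, sq]

theorem integral_le_mul_measureReal_add_mul_measureReal {α : Type*} [MeasurableSpace α]
    {μ : Measure α} [IsFiniteMeasure μ] {f : α → ℝ} {K : Set α} {a b : ℝ}
    (hK : MeasurableSet K) (hf : 0 ≤ᵐ[μ] f)
    (hle : ∀ᵐ x ∂μ, f x ≤ a + K.indicator (fun _ => b) x) :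
    ∫ x, f x ∂μ ≤ a * μ.real univ + b * μ.real K := by
  have hint : Integrable (fun x => a + K.indicator (fun _ => b) x) μ :=
    (integrable_const a).add ((integrable_const b).indicator hK)
  refine (integral_mono_of_nonneg hf hint hle).trans_eq ?_
  rw [integral_add (integrable_const a) ((integrable_const b).indicator hK), integral_const,
    integral_indicator_const b hK, smul_eq_mul, smul_eq_mul, mul_comm, mul_comm b]

theorem sub_mem_Icc_of_abs_le_one {u c : ℝ} (hu : |u| ≤ 1) (hc : |c| ≤ 1) :
    u - c ∈ Icc (-2 : ℝ) 2 := by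
  obtain ⟨hu₁, hu₂⟩ := abs_le.mp hu
  obtain ⟨hc₁, hc₂⟩ := abs_le.mp hc
  constructor <;> linarith

theorem mem_Icc_of_abs_le_one {u : ℝ} (hu : |u| ≤ 1) : u ∈ Icc (-2 : ℝ) 2 := by
  simpa using sub_mem_Icc_of_abs_le_one hu (c := 0) (by simp)

section ShiftBounds

variable {W : ℝ → ℝ} {L Q : ℝ≥0} {u c : ℝ}

theorem abs_sub_le_of_lipschitzOnWith (hL : LipschitzOnWith L W (Icc (-2) 2)) (hu : |u| ≤ 1)
    (hc : |c| ≤ 1) : |W (u - c) - W u| ≤ L * |c| := by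
  simpa [Real.dist_eq] using
    hL.dist_le_mul (u - c) (sub_mem_Icc_of_abs_le_one hu hc) u (mem_Icc_of_abs_le_one hu)

theorem abs_sub_le_mul_sq_of_deriv_eq_zero (hW : Differentiable ℝ W)
    (hQ : LipschitzOnWith Q (deriv W) (Icc (-2) 2)) (hu : |u| ≤ 1) (hcrit : deriv W u = 0)
    (hc : |c| ≤ 1) : |W (u - c) - W u| ≤ Q * c ^ 2 := by
  simpa using norm_sub_le_mul_sq_of_lipschitzOnWith_deriv (convex_Icc (-2) 2)
    (fun x _ => hW x) hQ (mem_Icc_of_abs_le_one hu) (sub_mem_Icc_of_abs_le_one hu hc) hcrit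

theorem abs_sub_le_mul_sq_add_indicator {M : Type*} {K : Set M} {x : M} {m : ℝ}
    (hW : Differentiable ℝ W) (hL : LipschitzOnWith L W (Icc (-2) 2))
    (hQ : LipschitzOnWith Q (deriv W) (Icc (-2) 2)) (hu : |u| ≤ 1)
    (hcrit : x ∉ K → deriv W u = 0) (hm : m ≤ 1) (hc : |c| ≤ m) :
    |W (u - c) - W u| ≤ Q * m ^ 2 + K.indicator (fun _ => L * m) x := by
  have hc₁ : |c| ≤ 1 := hc.trans hm
  by_cases hx : x ∈ K
  · rw [indicator_of_mem hx]
    calc |W (u - c) - W u| ≤ L * |c| := abs_sub_le_of_lipschitzOnWith hL hu hc₁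
      _ ≤ L * m := by gcongr
      _ ≤ Q * m ^ 2 + L * m := le_add_of_nonneg_left (by positivity)
  · rw [indicator_of_notMem hx, add_zero]
    calc |W (u - c) - W u| ≤ Q * c ^ 2 :=
          abs_sub_le_mul_sq_of_deriv_eq_zero hW hQ hu (hcrit hx) hc₁
      _ ≤ Q * m ^ 2 :=
          mul_le_mul_of_nonneg_left (sq_le_sq.mpr (hc.trans (le_abs_self m))) Q.2

end ShiftBounds

theorem potential_shift_estimate_general
    (W : ℝ → ℝ) (hW : ContDiff ℝ 2 W)
    (hW1' : deriv W 1 = 0) (hWm1' : deriv W (-1) = 0) :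
    ∃ C > (0 : ℝ),
      ∀ (M : Type) (mM : MeasurableSpace M) (μ : Measure M), IsFiniteMeasure μ →
        ∀ u : M → ℝ, Measurable u → (∀ᵐ x ∂μ, |u x| ≤ 1) →
          ∀ K : Set M, MeasurableSet K →
            (∀ᵐ x ∂μ, x ∉ K → u x = -1 ∨ u x = 1) →
            ∀ m ∈ Set.Icc (0 : ℝ) 1, ∀ c : ℝ, |c| ≤ m →
              (∫ x, |W (u x - c) - W (u x)| ∂μ) ≤
                C * (m ^ 2 * (μ Set.univ).toReal + m * (μ K).toReal) := by
  obtain ⟨L, hL⟩ := hW.contDiffOn.exists_lipschitzOnWith two_ne_zero (convex_Icc (-2) 2)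
    isCompact_Icc
  obtain ⟨Q, hQ⟩ := (hW.deriv' (n := 1)).contDiffOn.exists_lipschitzOnWith one_ne_zero
    (convex_Icc (-2) 2) isCompact_Icc
  refine ⟨L + Q + 1, by positivity, fun M _ μ _ u _ hu K hK hwells m ⟨hm₀, hm₁⟩ c hc => ?_⟩
  have hpointwise : ∀ᵐ x ∂μ,
      |W (u x - c) - W (u x)| ≤ Q * m ^ 2 + K.indicator (fun _ => L * m) x := by
    filter_upwards [hu, hwells] with x hux hwell
    refine abs_sub_le_mul_sq_add_indicator (hW.differentiable two_ne_zero) hL hQ hux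
      (fun hx => ?_) hm₁ hc
    rcases hwell hx with h | h <;> rw [h] <;> assumption
  have hμ₀ : 0 ≤ μ.real univ := measureReal_nonneg
  have hμK : 0 ≤ μ.real K := measureReal_nonneg
  calc ∫ x, |W (u x - c) - W (u x)| ∂μ ≤ Q * m ^ 2 * μ.real univ + L * m * μ.real K :=
        integral_le_mul_measureReal_add_mul_measureReal hK (ae_of_all _ fun _ => abs_nonneg _)
          hpointwise
    _ ≤ (L + Q + 1) * (m ^ 2 * μ.real univ + m * μ.real K) := by
        nlinarith [mul_nonneg (sq_nonneg m) hμ₀, mul_nonneg hm₀ hμK, L.2, Q.2]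

/-- **Potential-energy cost of shifting a phase field by a constant.**
If `W` is `C²` with nondegenerate zeros at `±1` (`W(±1) = 0`, `W'(±1) = 0`),
there is `C > 0` such that for every finite measure space, every `u` with
`|u| ≤ 1` a.e. and `u ∈ {-1,1}` a.e. off a set `K`, every `m ∈ [0,1]` and every
`c` with `|c| ≤ m`, one has `∫ |W(u - c) - W(u)| ≤ C (m² μ(M) + m μ(K))`. -/
theorem potential_shift_estimate
    (W : ℝ → ℝ) (hW : ContDiff ℝ 2 W)
    (hW1 : W 1 = 0) (hWm1 : W (-1) = 0)
    (hW1' : deriv W 1 = 0) (hWm1' : deriv W (-1) = 0) :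
    ∃ C > (0 : ℝ),
      ∀ (M : Type) (mM : MeasurableSpace M) (μ : Measure M), IsFiniteMeasure μ →
        ∀ u : M → ℝ, Measurable u → (∀ᵐ x ∂μ, |u x| ≤ 1) →
          ∀ K : Set M, MeasurableSet K →
            (∀ᵐ x ∂μ, x ∉ K → u x = -1 ∨ u x = 1) →
            ∀ m ∈ Set.Icc (0 : ℝ) 1, ∀ c : ℝ, |c| ≤ m →
              (∫ x, |W (u x - c) - W (u x)| ∂μ) ≤
                C * (m ^ 2 * (μ Set.univ).toReal + m * (μ K).toReal) :=
  potential_shift_estimate_general W hW hW1' hWm1'
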